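/- An infinite normal subgroup of infinite index in a word hyperbolic group is not quasiconvex. -/

import Mathlib

/-- `S` is a finite generating set of the group `G`. -/
def IsFinGenSet {G : Type*} [Group G] (S : Set G) : Prop :=
  S.Finite ∧ Subgroup.closure S = ⊤

/-- The word length of `g` with respect to the (symmetrized) generating set `S`. -/
noncomputable def wordLength {G : Type*} [Group G] (S : Set G) (g : G) : ℕ :=
  sInf {n : ℕ | ∃ w : List G, w.length = n ∧ (∀ x ∈ w, x ∈ S ∨ x⁻¹ ∈ S) ∧ w.prod = g}

/-- The word metric on `G` associated to the generating set `S`. -/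
noncomputable def wordDist {G : Type*} [Group G] (S : Set G) (g h : G) : ℕ :=
  wordLength S (g⁻¹ * h)

/-- `p` is a geodesic (edge-)path in the Cayley graph `Γ(G,S)` from `g` to `h`. -/
def IsGeodesic {G : Type*} [Group G] (S : Set G) (p : List G) (g h : G) : Prop :=
  p.head? = some g ∧ p.getLast? = some h ∧
  List.Chain' (fun a b => wordDist S a b = 1) p ∧
  p.length = wordDist S g h + 1

/-- A subgroup `H ≤ G` is quasiconvex with respect to the generating set `S` if every
geodesic in the Cayley graph with both endpoints in `H` stays in a bounded
neighborhood of `H`. -/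
def IsQuasiconvex {G : Type*} [Group G] (S : Set G) (H : Subgroup G) : Prop :=
  ∃ ε : ℕ, ∀ g ∈ H, ∀ h ∈ H, ∀ p : List G, IsGeodesic S p g h →
    ∀ x ∈ p, ∃ k ∈ H, wordDist S x k ≤ ε

/-- The Gromov product `(x|y)_w` in the word metric. -/
noncomputable def gromovProd {G : Type*} [Group G] (S : Set G) (w x y : G) : ℝ :=
  ((wordDist S w x : ℝ) + (wordDist S w y : ℝ) - (wordDist S x y : ℝ)) / 2

/-- `G` is word hyperbolic with respect to `S`: the Gromov product satisfies the
`δ`-hyperbolic four point inequality. -/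
def IsHyperbolic {G : Type*} [Group G] (S : Set G) : Prop :=
  ∃ δ : ℝ, 0 ≤ δ ∧ ∀ w x y z : G,
    min (gromovProd S w x z) (gromovProd S w z y) - δ ≤ gromovProd S w x y

/-!
Let `F` be normal and `ε`-quasiconvex, and `δ` a hyperbolicity constant. Given `g ∈ G`, pick
`f ∈ F` with `|f| ≥ 2|g|` and look at the quadrilateral `1, g, g f, g f g⁻¹`. Its sides
`[g, g f]` (a translate of `[1, f]`) and `[1, g f g⁻¹]` stay `ε`-close to `g F` and to `F`, and
the two short sides have length `|g|`, so by two applications of the tripod lemma the point of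
`[g, g f]` at distance `|g|` from `g` is `8δ`-close to `[1, g f g⁻¹]`. Hence the coset `g F`
meets the ball of radius `2ε + 8δ`; balls are finite, so `F` has finite index.
-/

section WordMetric

variable {G : Type*} [Group G] {S : Set G}

lemma wordLength_le_length {g : G} {w : List G} (hw : ∀ x ∈ w, x ∈ S ∨ x⁻¹ ∈ S)
    (hg : w.prod = g) : wordLength S g ≤ w.length :=
  Nat.sInf_le ⟨w, rfl, hw, hg⟩

lemma exists_word_length_eq_wordLength (hS : Subgroup.closure S = ⊤) (g : G) :
    ∃ w : List G, w.length = wordLength S g ∧ (∀ x ∈ w, x ∈ S ∨ x⁻¹ ∈ S) ∧ w.prod = g := by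
  refine Nat.sInf_mem (s := {n | ∃ w : List G, w.length = n ∧ _ ∧ w.prod = g}) ?_
  have hg : g ∈ Submonoid.closure (S ∪ S⁻¹) := by
    rw [← Subgroup.closure_toSubmonoid, hS]
    exact Subgroup.mem_top g
  obtain ⟨w, hw, rfl⟩ := Submonoid.exists_list_of_mem_closure hg
  exact ⟨w.length, w, rfl, hw, rfl⟩

lemma wordLength_one : wordLength S (1 : G) = 0 :=
  Nat.le_zero.1 (wordLength_le_length (w := []) (by simp) rfl)

lemma eq_one_of_wordLength_eq_zero (hS : Subgroup.closure S = ⊤) {g : G}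
    (h : wordLength S g = 0) : g = 1 := by
  obtain ⟨w, hlen, -, rfl⟩ := exists_word_length_eq_wordLength hS g
  rw [h, List.length_eq_zero_iff] at hlen
  simp [hlen]

lemma wordLength_le_one {s : G} (hs : s ∈ S ∨ s⁻¹ ∈ S) : wordLength S s ≤ 1 :=
  wordLength_le_length (w := [s]) (by simpa using hs) (by simp)

lemma wordLength_mul_le (hS : Subgroup.closure S = ⊤) (a b : G) :
    wordLength S (a * b) ≤ wordLength S a + wordLength S b := by
  obtain ⟨u, hlu, hu, rfl⟩ := exists_word_length_eq_wordLength hS a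
  obtain ⟨v, hlv, hv, rfl⟩ := exists_word_length_eq_wordLength hS b
  rw [← hlu, ← hlv]
  simpa using wordLength_le_length (S := S) (w := u ++ v)
    (by simpa using fun x hx => (List.mem_append.1 hx).elim (hu x) (hv x)) List.prod_append

lemma wordLength_inv_le (hS : Subgroup.closure S = ⊤) (a : G) :
    wordLength S a⁻¹ ≤ wordLength S a := by
  obtain ⟨u, hlen, hu, rfl⟩ := exists_word_length_eq_wordLength hS a
  rw [← hlen, List.prod_inv_reverse]
  refine (wordLength_le_length ?_ rfl).trans (by simp)
  simp only [List.mem_reverse, List.mem_map, forall_exists_index, and_imp]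
  rintro _ x hx rfl
  simpa [or_comm] using hu x hx

lemma wordLength_inv (hS : Subgroup.closure S = ⊤) (a : G) :
    wordLength S a⁻¹ = wordLength S a :=
  le_antisymm (wordLength_inv_le hS a) (by simpa using wordLength_inv_le hS a⁻¹)

lemma finite_setOf_wordLength_le (hfin : S.Finite) (hS : Subgroup.closure S = ⊤) (R : ℕ) :
    {g : G | wordLength S g ≤ R}.Finite := by
  have : Finite ↥(S ∪ S⁻¹) := (hfin.union hfin.inv).to_subtype
  refine ((List.finite_length_le _ R).image fun l : List ↥(S ∪ S⁻¹) => (l.map (↑)).prod).subset ?_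
  intro g hg
  obtain ⟨w, hlen, hw, rfl⟩ := exists_word_length_eq_wordLength hS g
  lift w to List ↥(S ∪ S⁻¹) using hw
  refine ⟨w, ?_, rfl⟩
  rw [Set.mem_ofPred_eq, ← List.length_map Subtype.val, hlen]
  exact hg

lemma exists_mem_le_wordLength (hfin : S.Finite) (hS : Subgroup.closure S = ⊤)
    {F : Subgroup G} (hF : Infinite F) (R : ℕ) : ∃ f ∈ F, R ≤ wordLength S f := by
  obtain ⟨f, hfF, hf⟩ :=
    ((Set.infinite_coe_iff.1 hF).sdiff (finite_setOf_wordLength_le hfin hS R)).nonempty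
  exact ⟨f, hfF, (not_le.1 hf).le⟩

lemma wordDist_self (g : G) : wordDist S g g = 0 := by
  simp [wordDist, wordLength_one]

lemma wordDist_one_left (g : G) : wordDist S 1 g = wordLength S g := by
  simp [wordDist]

lemma wordDist_self_mul (g h : G) : wordDist S g (g * h) = wordLength S h := by
  simp [wordDist]

lemma wordDist_mul_left (k g h : G) : wordDist S (k * g) (k * h) = wordDist S g h := by
  simp [wordDist, mul_assoc]

lemma wordDist_comm (hS : Subgroup.closure S = ⊤) (g h : G) :
    wordDist S g h = wordDist S h g := by
  rw [wordDist, ← wordLength_inv hS, wordDist, mul_inv_rev, inv_inv]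

lemma wordDist_triangle (hS : Subgroup.closure S = ⊤) (g k h : G) :
    wordDist S g h ≤ wordDist S g k + wordDist S k h := by
  simpa [wordDist, mul_assoc] using wordLength_mul_le hS (g⁻¹ * k) (k⁻¹ * h)

lemma eq_of_wordDist_eq_zero (hS : Subgroup.closure S = ⊤) {g h : G}
    (hd : wordDist S g h = 0) : g = h :=
  (inv_mul_eq_one.1 (eq_one_of_wordLength_eq_zero hS hd))

end WordMetric

section Geodesic

variable {G : Type*} [Group G] {S : Set G}

lemma wordDist_getElem_le_of_isChain (hS : Subgroup.closure S = ⊤) {p : List G}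
    (hp : p.IsChain fun a b => wordDist S a b = 1) {i j : ℕ} (hij : i ≤ j)
    (hj : j < p.length) : wordDist S p[i] p[j] ≤ j - i := by
  induction j, hij using Nat.le_induction with
  | base => simp [wordDist_self]
  | succ j hij ih =>
    calc wordDist S p[i] p[j + 1] ≤ wordDist S p[i] p[j] + wordDist S p[j] p[j + 1] :=
          wordDist_triangle hS _ _ _
      _ ≤ (j - i) + 1 := add_le_add (ih (by omega)) (List.isChain_iff_getElem.1 hp j hj).le
      _ = j + 1 - i := by omega

namespace IsGeodesic

variable {p : List G} {g h : G}

lemma getElem_zero (hp : IsGeodesic S p g h) (h0 : 0 < p.length) : p[0] = g := by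
  have := hp.1
  rwa [List.head?_eq_getElem?, List.getElem?_eq_getElem h0, Option.some_inj] at this

lemma getElem_length_sub_one (hp : IsGeodesic S p g h) (h0 : p.length - 1 < p.length) :
    p[p.length - 1] = h := by
  have := hp.2.1
  rwa [List.getLast?_eq_getElem?, List.getElem?_eq_getElem h0, Option.some_inj] at this

lemma wordDist_getElem (hS : Subgroup.closure S = ⊤) (hp : IsGeodesic S p g h) {i : ℕ}
    (hi : i < p.length) : wordDist S g p[i] = i ∧ wordDist S p[i] h = wordDist S g h - i := by
  have hlen := hp.2.2.2
  have hfirst := wordDist_getElem_le_of_isChain hS hp.2.2.1 (Nat.zero_le i) hi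
  have hlast := wordDist_getElem_le_of_isChain hS hp.2.2.1 (i := i) (j := p.length - 1) (by omega)
    (by omega)
  rw [hp.getElem_zero (by omega)] at hfirst
  rw [hp.getElem_length_sub_one (by omega)] at hlast
  have := wordDist_triangle hS g p[i] h
  omega

lemma exists_mem_wordDist_eq (hS : Subgroup.closure S = ⊤) (hp : IsGeodesic S p g h) {a : ℕ}
    (ha : a ≤ wordDist S g h) :
    ∃ z ∈ p, wordDist S g z = a ∧ wordDist S g z + wordDist S z h = wordDist S g h := by
  have hlen := hp.2.2.2
  obtain ⟨hgz, hzh⟩ := hp.wordDist_getElem hS (i := a) (by omega)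
  exact ⟨p[a], List.getElem_mem _, hgz, by omega⟩

end IsGeodesic

lemma exists_isGeodesic (hS : Subgroup.closure S = ⊤) (g h : G) : ∃ p, IsGeodesic S p g h := by
  generalize hn : wordDist S g h = n
  induction n generalizing g with
  | zero =>
    exact ⟨[g], by simp, by simp [eq_of_wordDist_eq_zero hS hn], List.isChain_singleton _,
      by simp [hn]⟩
  | succ n ih =>
    obtain ⟨_ | ⟨s, w⟩, hlen, hw, hprod⟩ := exists_word_length_eq_wordLength hS (g⁻¹ * h)
    · rw [wordDist] at hn
      simp [hn] at hlen
    have hstep : wordDist S g (g * s) ≤ 1 := by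
      rw [wordDist, inv_mul_cancel_left]
      exact wordLength_le_one (hw s (by simp))
    have hrest : wordDist S (g * s) h ≤ n := by
      have hw' : w.prod = (g * s)⁻¹ * h := by
        rw [mul_inv_rev, mul_assoc, ← hprod, List.prod_cons, inv_mul_cancel_left]
      have := wordLength_le_length (S := S) (fun x hx => hw x (List.mem_cons_of_mem s hx)) hw'
      rw [wordDist] at hn
      simp only [List.length_cons] at hlen
      rw [wordDist]
      omega
    have htri := wordDist_triangle hS g (g * s) h
    obtain ⟨p, hp⟩ := ih (g * s) (by omega)
    have hp0 : p ≠ [] := by rintro rfl; simp [IsGeodesic] at hp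
    refine ⟨g :: p, by simp, ?_, ?_, ?_⟩
    · simpa [List.getLast?_cons, List.getLast?_eq_some_getLast hp0] using hp.2.1
    · refine List.isChain_cons.2 ⟨?_, hp.2.2.1⟩
      simp only [hp.1, Option.mem_def, Option.some.injEq, forall_eq']
      omega
    · rw [List.length_cons, hp.2.2.2]
      omega

end Geodesic

section Hyperbolic

variable {G : Type*} [Group G] {S : Set G}

def IsHyperbolicWith (S : Set G) (δ : ℝ) : Prop :=
  ∀ w x y z : G, min (gromovProd S w x z) (gromovProd S w z y) - δ ≤ gromovProd S w x y

lemma IsHyperbolicWith.nonneg {δ : ℝ} (hδ : IsHyperbolicWith S δ) : 0 ≤ δ := by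
  simpa using hδ 1 1 1 1

lemma gromovProd_comm (hS : Subgroup.closure S = ⊤) (w x y : G) :
    gromovProd S w x y = gromovProd S w y x := by
  rw [gromovProd, gromovProd, wordDist_comm hS x y, add_comm (wordDist S w x : ℝ)]

lemma gromovProd_eq_of_add_eq {w x y : G} (h : wordDist S w x + wordDist S x y = wordDist S w y) :
    gromovProd S w x y = wordDist S w x := by
  rw [gromovProd, ← h, Nat.cast_add]
  ring

lemma le_gromovProd_iff {w x y : G} {a : ℕ} :
    (a : ℝ) ≤ gromovProd S w x y ↔ 2 * a + wordDist S x y ≤ wordDist S w x + wordDist S w y := by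
  rw [gromovProd, le_div_iff₀ two_pos, le_sub_iff_add_le, mul_comm]
  norm_cast

/-- The tripod lemma, for the triangle `x y h` and the points `m ∈ [x, y]`, `z ∈ [x, h]`. -/
lemma IsHyperbolicWith.wordDist_le (hS : Subgroup.closure S = ⊤) {δ : ℝ}
    (hδ : IsHyperbolicWith S δ) {x y h m z : G}
    (hm : wordDist S x m + wordDist S m y = wordDist S x y)
    (hz : wordDist S x z + wordDist S z h = wordDist S x h)
    (hmz : wordDist S x m = wordDist S x z) (ha : (wordDist S x m : ℝ) ≤ gromovProd S x y h) :
    (wordDist S m z : ℝ) ≤ 4 * δ := by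
  set a : ℝ := (wordDist S x m : ℝ)
  have hmy : gromovProd S x m y = a := gromovProd_eq_of_add_eq hm
  have hhz : gromovProd S x h z = a := by
    rw [gromovProd_comm hS, gromovProd_eq_of_add_eq hz, ← hmz]
  have hyz : a - δ ≤ gromovProd S x y z := by
    simpa only [hhz, min_eq_right ha] using hδ x y z h
  have hmz' : a - 2 * δ ≤ gromovProd S x m z := by
    have hfour := hδ x m z y
    rw [hmy] at hfour
    have hmin : a - δ ≤ min a (gromovProd S x y z) := le_min (by linarith [hδ.nonneg]) hyz
    linarith
  rw [gromovProd, ← hmz] at hmz'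
  linarith

lemma IsGeodesic.exists_mem_wordDist_le (hS : Subgroup.closure S = ⊤) {δ : ℝ}
    (hδ : IsHyperbolicWith S δ) {x y h m : G} {q : List G} (hq : IsGeodesic S q x h)
    (hm : wordDist S x m + wordDist S m y = wordDist S x y)
    (ha : (wordDist S x m : ℝ) ≤ gromovProd S x y h) :
    ∃ z ∈ q, wordDist S x z = wordDist S x m ∧
      wordDist S x z + wordDist S z h = wordDist S x h ∧ (wordDist S m z : ℝ) ≤ 4 * δ := by
  have hxh : wordDist S x m ≤ wordDist S x h := by
    have := le_gromovProd_iff.1 ha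
    have := wordDist_triangle hS x h y
    have := wordDist_comm hS y h
    omega
  obtain ⟨z, hzq, hxz, hz⟩ := hq.exists_mem_wordDist_eq hS hxh
  exact ⟨z, hzq, hxz, hz, hδ.wordDist_le hS hm hz hxz.symm ha⟩

/-- The tripod lemma in the triangle `c b a`, then in the triangle `a c e`. -/
lemma IsGeodesic.exists_mem_wordDist_le_eight_mul (hS : Subgroup.closure S = ⊤) {δ : ℝ}
    (hδ : IsHyperbolicWith S δ) {a b c e m : G} {q : List G} (hq : IsGeodesic S q a e)
    (hm : wordDist S b m + wordDist S m c = wordDist S b c)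
    (hab : wordDist S a b ≤ wordDist S b m) (hce : wordDist S c e ≤ wordDist S m c) :
    ∃ z ∈ q, (wordDist S m z : ℝ) ≤ 8 * δ := by
  obtain ⟨q', hq'⟩ := exists_isGeodesic hS c a
  have hcomm := wordDist_comm hS
  obtain ⟨z', -, hcz', hz', hmz'⟩ := hq'.exists_mem_wordDist_le hS hδ (y := b) (m := m)
    (by have := hcomm c m; have := hcomm m b; have := hcomm c b; omega) (by
      have := wordDist_triangle hS b a c
      have := hcomm c m; have := hcomm c b; have := hcomm c a; have := hcomm b a
      rw [le_gromovProd_iff]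
      omega)
  obtain ⟨z, hzq, -, -, hz'z⟩ := hq.exists_mem_wordDist_le hS hδ (y := c) (m := z')
    (by have := hcomm a z'; have := hcomm a c; have := hcomm z' c; omega) (by
      have := wordDist_triangle hS a e c
      have := hcomm a z'; have := hcomm a c; have := hcomm e c; have := hcomm c m
      rw [le_gromovProd_iff]
      omega)
  refine ⟨z, hzq, ?_⟩
  have := wordDist_triangle hS m z' z
  have : (wordDist S m z : ℝ) ≤ wordDist S m z' + wordDist S z' z := by exact_mod_cast this
  linarith

end Hyperbolic

section Quasiconvex

variable {G : Type*} [Group G] {S : Set G}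

def IsQuasiconvexWith (S : Set G) (H : Subgroup G) (ε : ℕ) : Prop :=
  ∀ g ∈ H, ∀ h ∈ H, ∀ p : List G, IsGeodesic S p g h → ∀ x ∈ p, ∃ k ∈ H, wordDist S x k ≤ ε

lemma IsQuasiconvexWith.exists_wordLength_le (hfin : S.Finite) (hS : Subgroup.closure S = ⊤)
    {δ : ℝ} (hδ : IsHyperbolicWith S δ) {F : Subgroup G} [F.Normal] (hinf : Infinite F) {ε : ℕ}
    (hF : IsQuasiconvexWith S F ε) (g : G) :
    ∃ s : G, (s : G ⧸ F) = g ∧ (wordLength S s : ℝ) ≤ 2 * ε + 8 * δ := by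
  obtain ⟨f, hfF, hf⟩ := exists_mem_le_wordLength hfin hS hinf (2 * wordLength S g)
  obtain ⟨p, hp⟩ := exists_isGeodesic hS 1 f
  obtain ⟨m, hmp, h1m, hm⟩ :=
    hp.exists_mem_wordDist_eq hS (a := wordLength S g) (by rw [wordDist_one_left]; omega)
  simp only [wordDist_one_left] at h1m hm
  obtain ⟨f₁, hf₁F, hmf₁⟩ := hF 1 F.one_mem f hfF p hp m hmp
  obtain ⟨q, hq⟩ := exists_isGeodesic hS 1 (g * f * g⁻¹)
  obtain ⟨z, hzq, hmz⟩ := hq.exists_mem_wordDist_le_eight_mul hS hδ (b := g) (c := g * f)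
    (m := g * m) (by simp only [wordDist_self_mul, wordDist_mul_left]; omega)
    (by simp only [wordDist_one_left, wordDist_self_mul]; omega)
    (by simp only [wordDist_self_mul, wordDist_mul_left, wordLength_inv hS]; omega)
  obtain ⟨k, hkF, hzk⟩ := hF 1 F.one_mem _ (Subgroup.Normal.conj_mem ‹_› f hfF g) q hq z hzq
  refine ⟨k⁻¹ * (g * f₁), ?_, ?_⟩
  · simp [(QuotientGroup.eq_one_iff _).2 hkF, (QuotientGroup.eq_one_iff _).2 hf₁F]
  have hkz : (wordDist S k z : ℝ) ≤ ε := by rw [wordDist_comm hS]; exact_mod_cast hzk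
  have hzm : (wordDist S z (g * m) : ℝ) ≤ 8 * δ := by rwa [wordDist_comm hS]
  have hmf₁' : (wordDist S (g * m) (g * f₁) : ℝ) ≤ ε := by
    rw [wordDist_mul_left]; exact_mod_cast hmf₁
  have htri : wordDist S k (g * f₁) ≤
      wordDist S k z + (wordDist S z (g * m) + wordDist S (g * m) (g * f₁)) :=
    (wordDist_triangle hS _ z _).trans (Nat.add_le_add_left (wordDist_triangle hS _ _ _) _)
  calc (wordLength S (k⁻¹ * (g * f₁)) : ℝ) = wordDist S k (g * f₁) := rfl
    _ ≤ wordDist S k z + (wordDist S z (g * m) + wordDist S (g * m) (g * f₁)) := by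
      exact_mod_cast htri
    _ ≤ 2 * ε + 8 * δ := by linarith

lemma IsQuasiconvexWith.finite_quotient (hfin : S.Finite) (hS : Subgroup.closure S = ⊤)
    {δ : ℝ} (hδ : IsHyperbolicWith S δ) {F : Subgroup G} [F.Normal] (hinf : Infinite F) {ε : ℕ}
    (hF : IsQuasiconvexWith S F ε) : Finite (G ⧸ F) := by
  have hcover : Set.univ ⊆ ((↑) : G → G ⧸ F) '' {s | wordLength S s ≤ ⌊2 * ε + 8 * δ⌋₊} := by
    rintro x -
    induction x using QuotientGroup.induction_on with | H g => ?_
    obtain ⟨s, hs, hlen⟩ := hF.exists_wordLength_le hfin hS hδ hinf g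
    exact ⟨s, Nat.le_floor hlen, hs⟩
  exact Set.finite_univ_iff.1 (((finite_setOf_wordLength_le hfin hS _).image _).subset hcover)

end Quasiconvex

/-- an infinite normal subgroup of infinite index in a word hyperbolic
group is not quasiconvex. -/
theorem stmt9 {G : Type*} [Group G] (S : Set G) (hS : IsFinGenSet S)
    (hhyp : IsHyperbolic S) (F : Subgroup G) [F.Normal]
    (hinf : Infinite F) (hindex : F.index = 0) :
    ¬ IsQuasiconvex S F := by
  rintro ⟨ε, hF⟩
  obtain ⟨hfin, hgen⟩ := hS
  obtain ⟨δ, -, hδ⟩ := hhyp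
  have := IsQuasiconvexWith.finite_quotient hfin hgen hδ hinf hF
  exact Subgroup.index_ne_zero_of_finite hindex
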